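/- Let H : ℝ^{2n} → ℝ be smooth, U ⊆ ℝ^r and Λ ⊆ ℝ^l open, and Σ : U × Λ → V a smooth diffeomorphism onto an open V ⊆ ℝ^{2n} such that each σ_λ := Σ(·,λ) satisfies ∇H(σ_λ(x)) ∈ Im(J·Dσ_λ(x)) and Dσ_λ(x)ᵀ·J·Dσ_λ(x) = 0. Let W : U × Λ → ℝ be smooth with ∂W/∂x_i(x,λ) = Σ_{j=1}^n Σ²_j(x,λ)·∂Σ¹_j/∂x_i(x,λ) for all i (writing Σ = (Σ¹,Σ²) with values in ℝ^n × ℝ^n), and define φ : U × Λ → ℝ^l by φ_k(x,λ) = ∂W/∂λ_k(x,λ) − Σ_{j=1}^n Σ²_j(x,λ)·∂Σ¹_j/∂λ_k(x,λ), k = 1,...,l. Then for every (x,λ) ∈ U × Λ the linear map ∂φ/∂x(x,λ) : ℝ^r → ℝ^l (the partial Jacobian of φ in the x-variables) is injective. -/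

import Mathlib

open Matrix Filter Topology

noncomputable def mjac {ι κ : Type*} [Fintype ι] [DecidableEq ι] [Fintype κ]
    (F : (ι → ℝ) → (κ → ℝ)) (x : ι → ℝ) : Matrix κ ι ℝ :=
  Matrix.of fun i j => fderiv ℝ F x (Pi.single j 1) i

noncomputable def mgrad {ι : Type*} [Fintype ι] [DecidableEq ι]
    (f : (ι → ℝ) → ℝ) (x : ι → ℝ) : ι → ℝ :=
  fun i => fderiv ℝ f x (Pi.single i 1)

def symJ (n : ℕ) : Matrix (Fin n ⊕ Fin n) (Fin n ⊕ Fin n) ℝ :=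
  Matrix.fromBlocks 0 1 (-1) 0

section Helpers

variable {ι κ : Type*} [Fintype ι] [DecidableEq ι] [Fintype κ]

lemma pi_sum_single (v : ι → ℝ) : v = ∑ j, v j • (Pi.single j 1 : ι → ℝ) := by
  ext i
  simp [Pi.single_apply, Finset.sum_ite_eq]

lemma mjac_mulVec (F : (ι → ℝ) → (κ → ℝ)) (x : ι → ℝ) (v : ι → ℝ) :
    (mjac F x).mulVec v = fderiv ℝ F x v := by
  funext i
  have : fderiv ℝ F x v = fderiv ℝ F x (∑ j, v j • (Pi.single j 1 : ι → ℝ)) := by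
    rw [← pi_sum_single]
  rw [this, map_sum]
  simp only [_root_.map_smul]
  rw [Finset.sum_apply]
  simp [mjac, Matrix.mulVec, dotProduct, mul_comm]

lemma fderiv_comp_proj {E : Type*} [NormedAddCommGroup E] [NormedSpace ℝ E]
    (F : E → (κ → ℝ)) {x : E} (hF : DifferentiableAt ℝ F x) (i : κ) (u : E) :
    fderiv ℝ (fun y => F y i) x u = fderiv ℝ F x u i := by
  have h := ((ContinuousLinearMap.proj (R := ℝ) (φ := fun _ : κ => ℝ) i).hasFDerivAt.comp x
    hF.hasFDerivAt).fderiv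
  have e : (fun y => F y i) = (ContinuousLinearMap.proj (R := ℝ) (φ := fun _ : κ => ℝ) i) ∘ F := rfl
  rw [e, h]
  rfl

variable {E₁ E₂ G : Type*} [NormedAddCommGroup E₁] [NormedSpace ℝ E₁]
  [NormedAddCommGroup E₂] [NormedSpace ℝ E₂] [NormedAddCommGroup G] [NormedSpace ℝ G]

lemma hasFDerivAt_partial_fst (g : E₁ × E₂ → G) {x : E₁} {lam : E₂}
    (hg : DifferentiableAt ℝ g (x, lam)) :
    HasFDerivAt (fun y => g (y, lam))
      ((fderiv ℝ g (x, lam)).comp (ContinuousLinearMap.inl ℝ E₁ E₂)) x :=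
  hg.hasFDerivAt.comp x (hasFDerivAt_prodMk_left x lam)

lemma hasFDerivAt_partial_snd (g : E₁ × E₂ → G) {x : E₁} {lam : E₂}
    (hg : DifferentiableAt ℝ g (x, lam)) :
    HasFDerivAt (fun μ => g (x, μ))
      ((fderiv ℝ g (x, lam)).comp (ContinuousLinearMap.inr ℝ E₁ E₂)) lam :=
  hg.hasFDerivAt.comp lam (hasFDerivAt_prodMk_right x lam)

lemma fderiv_partial_fst (g : E₁ × E₂ → G) {x : E₁} {lam : E₂}
    (hg : DifferentiableAt ℝ g (x, lam)) (u : E₁) :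
    fderiv ℝ (fun y => g (y, lam)) x u = fderiv ℝ g (x, lam) (u, 0) := by
  rw [(hasFDerivAt_partial_fst g hg).fderiv]; rfl

lemma fderiv_partial_snd (g : E₁ × E₂ → G) {x : E₁} {lam : E₂}
    (hg : DifferentiableAt ℝ g (x, lam)) (w : E₂) :
    fderiv ℝ (fun μ => g (x, μ)) lam w = fderiv ℝ g (x, lam) (0, w) := by
  rw [(hasFDerivAt_partial_snd g hg).fderiv]; rfl

lemma diffAt_fderiv {E : Type*} [NormedAddCommGroup E] [NormedSpace ℝ E]
    (g : E → G) {p : E} (hg : ContDiffAt ℝ (⊤ : ℕ∞) g p) :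
    DifferentiableAt ℝ (fderiv ℝ g) p :=
  (hg.fderiv_right (m := 1) (WithTop.coe_le_coe.mpr le_top)).differentiableAt one_ne_zero

lemma hasFDerivAt_partial_fderiv_fst (g : E₁ × E₂ → G) {x : E₁} {lam : E₂}
    (hg : ContDiffAt ℝ (⊤ : ℕ∞) g (x, lam)) (w : E₁ × E₂) :
    HasFDerivAt (fun y => fderiv ℝ g (y, lam) w)
      ((ContinuousLinearMap.apply ℝ G w).comp
        ((fderiv ℝ (fderiv ℝ g) (x, lam)).comp (ContinuousLinearMap.inl ℝ E₁ E₂))) x :=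
  (ContinuousLinearMap.apply ℝ G w).hasFDerivAt.comp x
    (((diffAt_fderiv g hg).hasFDerivAt).comp x (hasFDerivAt_prodMk_left x lam))

lemma hasFDerivAt_partial_fderiv_snd (g : E₁ × E₂ → G) {x : E₁} {lam : E₂}
    (hg : ContDiffAt ℝ (⊤ : ℕ∞) g (x, lam)) (w : E₁ × E₂) :
    HasFDerivAt (fun μ => fderiv ℝ g (x, μ) w)
      ((ContinuousLinearMap.apply ℝ G w).comp
        ((fderiv ℝ (fderiv ℝ g) (x, lam)).comp (ContinuousLinearMap.inr ℝ E₁ E₂))) lam :=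
  (ContinuousLinearMap.apply ℝ G w).hasFDerivAt.comp lam
    (((diffAt_fderiv g hg).hasFDerivAt).comp lam (hasFDerivAt_prodMk_right x lam))

end Helpers

/-- For a generalized complete solution `Σ` of the Hamilton–Jacobi equation,
the partial Jacobian `∂φ/∂x(x,λ) : ℝ^r → ℝ^l` of the map `φ` built from the
extended Hamilton characteristic function `W` is injective at every point. -/
theorem partial_jacobian_phi_injective
    (n r l : ℕ)
    (H : ((Fin n ⊕ Fin n) → ℝ) → ℝ) (hH : ContDiff ℝ (⊤ : ℕ∞) H)
    (U : Set (Fin r → ℝ)) (Λ : Set (Fin l → ℝ)) (hU : IsOpen U) (hΛ : IsOpen Λ)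
    (V : Set ((Fin n ⊕ Fin n) → ℝ)) (hV : IsOpen V)
    (S : (Fin r → ℝ) × (Fin l → ℝ) → (Fin n ⊕ Fin n) → ℝ)
    (Sinv : ((Fin n ⊕ Fin n) → ℝ) → (Fin r → ℝ) × (Fin l → ℝ))
    (hS : ContDiffOn ℝ (⊤ : ℕ∞) S (U ×ˢ Λ))
    (hSinv : ContDiffOn ℝ (⊤ : ℕ∞) Sinv V)
    (hSmaps : ∀ w ∈ U ×ˢ Λ, S w ∈ V)
    (hleft : ∀ w ∈ U ×ˢ Λ, Sinv (S w) = w)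
    (hright : ∀ y ∈ V, Sinv y ∈ U ×ˢ Λ ∧ S (Sinv y) = y)
    (hsol1 : ∀ x ∈ U, ∀ lam ∈ Λ, mgrad H (S (x, lam)) ∈
      LinearMap.range (Matrix.mulVecLin (symJ n * mjac (fun y => S (y, lam)) x)))
    (hsol2 : ∀ x ∈ U, ∀ lam ∈ Λ,
      (mjac (fun y => S (y, lam)) x)ᵀ * symJ n * mjac (fun y => S (y, lam)) x = 0)
    (W : (Fin r → ℝ) × (Fin l → ℝ) → ℝ)
    (hW : ContDiffOn ℝ (⊤ : ℕ∞) W (U ×ˢ Λ))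
    (hWdef : ∀ x ∈ U, ∀ lam ∈ Λ, ∀ i : Fin r,
      fderiv ℝ (fun y => W (y, lam)) x (Pi.single i 1) =
        ∑ j : Fin n, S (x, lam) (Sum.inr j) *
          fderiv ℝ (fun y => S (y, lam) (Sum.inl j)) x (Pi.single i 1))
    (φ : (Fin r → ℝ) × (Fin l → ℝ) → (Fin l → ℝ))
    (hφ : ∀ x ∈ U, ∀ lam ∈ Λ, ∀ k : Fin l,
      φ (x, lam) k = fderiv ℝ (fun μ => W (x, μ)) lam (Pi.single k 1) -
        ∑ j : Fin n, S (x, lam) (Sum.inr j) *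
          fderiv ℝ (fun μ => S (x, μ) (Sum.inl j)) lam (Pi.single k 1)) :
    ∀ x ∈ U, ∀ lam ∈ Λ,
      Function.Injective (Matrix.mulVecLin (mjac (fun y => φ (y, lam)) x)) := by
  intro x hx lam hlam
  have hΩo : IsOpen (U ×ˢ Λ) := hU.prod hΛ
  have hp : (x, lam) ∈ U ×ˢ Λ := ⟨hx, hlam⟩
  -- basic differentiability facts
  have hSc : ∀ q ∈ U ×ˢ Λ, ContDiffAt ℝ (⊤ : ℕ∞) S q :=
    fun q hq => hS.contDiffAt (hΩo.mem_nhds hq)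
  have hWc : ∀ q ∈ U ×ˢ Λ, ContDiffAt ℝ (⊤ : ℕ∞) W q :=
    fun q hq => hW.contDiffAt (hΩo.mem_nhds hq)
  have hSd : ∀ q ∈ U ×ˢ Λ, DifferentiableAt ℝ S q :=
    fun q hq => (hSc q hq).differentiableAt (by simp)
  have hWd : ∀ q ∈ U ×ˢ Λ, DifferentiableAt ℝ W q :=
    fun q hq => (hWc q hq).differentiableAt (by simp)
  have hS1c : ∀ (j : Fin n), ∀ q ∈ U ×ˢ Λ,
      ContDiffAt ℝ (⊤ : ℕ∞) (fun q' => S q' (Sum.inl j)) q := fun j q hq =>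
    (ContinuousLinearMap.proj (R := ℝ) (φ := fun _ : Fin n ⊕ Fin n => ℝ)
      (Sum.inl j)).contDiff.comp_contDiffAt q (hSc q hq)
  have hS2c : ∀ (j : Fin n), ∀ q ∈ U ×ˢ Λ,
      ContDiffAt ℝ (⊤ : ℕ∞) (fun q' => S q' (Sum.inr j)) q := fun j q hq =>
    (ContinuousLinearMap.proj (R := ℝ) (φ := fun _ : Fin n ⊕ Fin n => ℝ)
      (Sum.inr j)).contDiff.comp_contDiffAt q (hSc q hq)
  have hS1d : ∀ (j : Fin n), ∀ q ∈ U ×ˢ Λ,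
      DifferentiableAt ℝ (fun q' => S q' (Sum.inl j)) q :=
    fun j q hq => (hS1c j q hq).differentiableAt (by simp)
  have hS2d : ∀ (j : Fin n), ∀ q ∈ U ×ˢ Λ,
      DifferentiableAt ℝ (fun q' => S q' (Sum.inr j)) q :=
    fun j q hq => (hS2c j q hq).differentiableAt (by simp)
  -- hWdef in full-derivative, arbitrary-direction form
  have hWdef' : ∀ q ∈ U ×ˢ Λ, ∀ v : Fin r → ℝ,
      fderiv ℝ W q (v, 0) =
        ∑ j : Fin n, S q (Sum.inr j) * fderiv ℝ (fun q' => S q' (Sum.inl j)) q (v, 0) := by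
    rintro ⟨y, μ⟩ hq v
    have h0 : ∀ i : Fin r, fderiv ℝ W (y, μ) ((Pi.single i 1 : Fin r → ℝ), 0) =
        ∑ j : Fin n, S (y, μ) (Sum.inr j) *
          fderiv ℝ (fun q' => S q' (Sum.inl j)) (y, μ) ((Pi.single i 1 : Fin r → ℝ), 0) := by
      intro i
      have h := hWdef y hq.1 μ hq.2 i
      rw [fderiv_partial_fst W (hWd _ hq)] at h
      rw [h]
      refine Finset.sum_congr rfl fun j _ => ?_
      rw [fderiv_partial_fst (fun q' => S q' (Sum.inl j)) (hS1d j _ hq)]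
    have hvp : ((v, 0) : (Fin r → ℝ) × (Fin l → ℝ)) =
        ∑ i, v i • (((Pi.single i 1 : Fin r → ℝ), (0 : Fin l → ℝ)) :
          (Fin r → ℝ) × (Fin l → ℝ)) := by
      refine Prod.ext ?_ ?_
      · rw [Prod.fst_sum]
        simpa using pi_sum_single v
      · rw [Prod.snd_sum]
        simp
    have hlin : ∀ (g : (Fin r → ℝ) × (Fin l → ℝ) →L[ℝ] ℝ),
        g (v, 0) = ∑ i, v i * g ((Pi.single i 1 : Fin r → ℝ), 0) := by
      intro g
      rw [hvp, map_sum]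
      refine Finset.sum_congr rfl fun i _ => ?_
      rw [_root_.map_smul, smul_eq_mul]
    calc fderiv ℝ W (y, μ) (v, 0)
        = ∑ i, v i * fderiv ℝ W (y, μ) ((Pi.single i 1 : Fin r → ℝ), 0) := hlin _
      _ = ∑ i, v i * ∑ j : Fin n, S (y, μ) (Sum.inr j) *
            fderiv ℝ (fun q' => S q' (Sum.inl j)) (y, μ) ((Pi.single i 1 : Fin r → ℝ), 0) := by
          refine Finset.sum_congr rfl fun i _ => ?_; rw [h0 i]
      _ = ∑ j : Fin n, S (y, μ) (Sum.inr j) * ∑ i, v i *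
            fderiv ℝ (fun q' => S q' (Sum.inl j)) (y, μ) ((Pi.single i 1 : Fin r → ℝ), 0) := by
          simp only [Finset.mul_sum]
          rw [Finset.sum_comm]
          exact Finset.sum_congr rfl fun j _ => Finset.sum_congr rfl fun i _ => by ring
      _ = ∑ j : Fin n, S (y, μ) (Sum.inr j) *
            fderiv ℝ (fun q' => S q' (Sum.inl j)) (y, μ) (v, 0) := by
          refine Finset.sum_congr rfl fun j _ => ?_
          rw [hlin]
  -- derivative of S at (x,lam) is bijective (chain rule on the inverse)
  have hSp : DifferentiableAt ℝ S (x, lam) := hSd _ hp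
  have hSVp : S (x, lam) ∈ V := hSmaps _ hp
  have hSinvp : DifferentiableAt ℝ Sinv (S (x, lam)) :=
    (hSinv.contDiffAt (hV.mem_nhds hSVp)).differentiableAt (by simp)
  have hfix : Sinv (S (x, lam)) = (x, lam) := hleft _ hp
  have hcomp1 : (fderiv ℝ Sinv (S (x, lam))).comp (fderiv ℝ S (x, lam)) =
      ContinuousLinearMap.id ℝ ((Fin r → ℝ) × (Fin l → ℝ)) := by
    have h1 : HasFDerivAt (Sinv ∘ S)
        ((fderiv ℝ Sinv (S (x, lam))).comp (fderiv ℝ S (x, lam))) (x, lam) :=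
      hSinvp.hasFDerivAt.comp _ hSp.hasFDerivAt
    have h2 : Sinv ∘ S =ᶠ[nhds (x, lam)] id := by
      filter_upwards [hΩo.mem_nhds hp] with q hq using hleft q hq
    exact (h1.congr_of_eventuallyEq h2.symm).unique (hasFDerivAt_id _)
  have hcomp2 : (fderiv ℝ S (x, lam)).comp (fderiv ℝ Sinv (S (x, lam))) =
      ContinuousLinearMap.id ℝ ((Fin n ⊕ Fin n) → ℝ) := by
    have h1 : HasFDerivAt (S ∘ Sinv)
        ((fderiv ℝ S (x, lam)).comp (fderiv ℝ Sinv (S (x, lam)))) (S (x, lam)) := by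
      have hS' : HasFDerivAt S (fderiv ℝ S (x, lam)) (Sinv (S (x, lam))) := by
        rw [hfix]; exact hSp.hasFDerivAt
      exact hS'.comp _ hSinvp.hasFDerivAt
    have h2 : S ∘ Sinv =ᶠ[nhds (S (x, lam))] id := by
      filter_upwards [hV.mem_nhds hSVp] with q hq using (hright q hq).2
    exact (h1.congr_of_eventuallyEq h2.symm).unique (hasFDerivAt_id _)
  have hUn : U ∈ nhds x := hU.mem_nhds hx
  refine (injective_iff_map_eq_zero _).mpr ?_
  intro v hv0
  -- the derivative of φ(·,lam) in direction v vanishes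
  have ha0 : fderiv ℝ (fun y => φ (y, lam)) x v = 0 := by
    rw [← mjac_mulVec]
    exact hv0
  -- ψ : the explicit local formula for φ(·,lam)
  have hφψ : (fun y => φ (y, lam)) =ᶠ[nhds x] (fun y k =>
      fderiv ℝ W (y, lam) ((0 : Fin r → ℝ), (Pi.single k 1 : Fin l → ℝ)) -
        ∑ j : Fin n, S (y, lam) (Sum.inr j) *
          fderiv ℝ (fun q => S q (Sum.inl j)) (y, lam)
            ((0 : Fin r → ℝ), (Pi.single k 1 : Fin l → ℝ))) := by
    filter_upwards [hUn] with y hy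
    funext k
    rw [hφ y hy lam hlam k, fderiv_partial_snd W (hWd _ ⟨hy, hlam⟩)]
    congr 1
    exact Finset.sum_congr rfl fun j _ => by
      rw [fderiv_partial_snd (fun q => S q (Sum.inl j)) (hS1d j _ ⟨hy, hlam⟩)]
  -- HasFDerivAt facts for the components of ψ
  have hψk : ∀ k : Fin l, HasFDerivAt (fun y =>
      fderiv ℝ W (y, lam) ((0 : Fin r → ℝ), (Pi.single k 1 : Fin l → ℝ)) -
        ∑ j : Fin n, S (y, lam) (Sum.inr j) *
          fderiv ℝ (fun q => S q (Sum.inl j)) (y, lam)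
            ((0 : Fin r → ℝ), (Pi.single k 1 : Fin l → ℝ)))
      (((ContinuousLinearMap.apply ℝ ℝ ((0 : Fin r → ℝ), (Pi.single k 1 : Fin l → ℝ))).comp
          ((fderiv ℝ (fderiv ℝ W) (x, lam)).comp
            (ContinuousLinearMap.inl ℝ (Fin r → ℝ) (Fin l → ℝ)))) -
        ∑ j : Fin n,
          (S (x, lam) (Sum.inr j) •
            ((ContinuousLinearMap.apply ℝ ℝ
                ((0 : Fin r → ℝ), (Pi.single k 1 : Fin l → ℝ))).comp
              ((fderiv ℝ (fderiv ℝ (fun q => S q (Sum.inl j))) (x, lam)).comp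
                (ContinuousLinearMap.inl ℝ (Fin r → ℝ) (Fin l → ℝ)))) +
           fderiv ℝ (fun q => S q (Sum.inl j)) (x, lam)
              ((0 : Fin r → ℝ), (Pi.single k 1 : Fin l → ℝ)) •
            ((fderiv ℝ (fun q => S q (Sum.inr j)) (x, lam)).comp
              (ContinuousLinearMap.inl ℝ (Fin r → ℝ) (Fin l → ℝ))))) x := by
    intro k
    exact (hasFDerivAt_partial_fderiv_fst W (hWc _ hp) _).sub
      (HasFDerivAt.fun_sum fun j _ =>
        (hasFDerivAt_partial_fst (fun q => S q (Sum.inr j)) (hS2d j _ hp)).mul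
          (hasFDerivAt_partial_fderiv_fst (fun q => S q (Sum.inl j)) (hS1c j _ hp) _))
  -- value of the x-derivative of the k-th component of φ(·,lam)
  have hφk : ∀ k : Fin l,
      fderiv ℝ (fun y => φ (y, lam) k) x v =
        fderiv ℝ (fderiv ℝ W) (x, lam) ((v, 0))
            ((0 : Fin r → ℝ), (Pi.single k 1 : Fin l → ℝ)) -
          ∑ j : Fin n,
            (S (x, lam) (Sum.inr j) *
              fderiv ℝ (fderiv ℝ (fun q => S q (Sum.inl j))) (x, lam) ((v, 0))
                ((0 : Fin r → ℝ), (Pi.single k 1 : Fin l → ℝ)) +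
             fderiv ℝ (fun q => S q (Sum.inl j)) (x, lam)
                ((0 : Fin r → ℝ), (Pi.single k 1 : Fin l → ℝ)) *
              fderiv ℝ (fun q => S q (Sum.inr j)) (x, lam) ((v, 0))) := by
    intro k
    have heqk : (fun y => φ (y, lam) k) =ᶠ[nhds x] (fun y =>
        fderiv ℝ W (y, lam) ((0 : Fin r → ℝ), (Pi.single k 1 : Fin l → ℝ)) -
          ∑ j : Fin n, S (y, lam) (Sum.inr j) *
            fderiv ℝ (fun q => S q (Sum.inl j)) (y, lam)
              ((0 : Fin r → ℝ), (Pi.single k 1 : Fin l → ℝ))) :=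
      hφψ.mono fun y hy => congrFun hy k
    rw [heqk.fderiv_eq, (hψk k).fderiv]
    simp only [ContinuousLinearMap.coe_sub', Pi.sub_apply, ContinuousLinearMap.coe_comp',
      Function.comp_apply, ContinuousLinearMap.inl_apply, ContinuousLinearMap.apply_apply,
      ContinuousLinearMap.coe_sum', Finset.sum_apply, ContinuousLinearMap.add_apply,
      ContinuousLinearMap.coe_smul', Pi.smul_apply, smul_eq_mul]
  -- differentiate hWdef' in the λ-direction
  have hkey : ∀ k : Fin l,
      fderiv ℝ (fderiv ℝ W) (x, lam) ((0 : Fin r → ℝ), (Pi.single k 1 : Fin l → ℝ)) ((v, 0)) =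
        ∑ j : Fin n,
          (S (x, lam) (Sum.inr j) *
            fderiv ℝ (fderiv ℝ (fun q => S q (Sum.inl j))) (x, lam)
              ((0 : Fin r → ℝ), (Pi.single k 1 : Fin l → ℝ)) ((v, 0)) +
           fderiv ℝ (fun q => S q (Sum.inl j)) (x, lam) ((v, 0)) *
            fderiv ℝ (fun q => S q (Sum.inr j)) (x, lam)
              ((0 : Fin r → ℝ), (Pi.single k 1 : Fin l → ℝ))) := by
    intro k
    have hL := hasFDerivAt_partial_fderiv_snd W (hWc _ hp)
      (((v, 0)) : (Fin r → ℝ) × (Fin l → ℝ))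
    have hR : HasFDerivAt (fun μ =>
        ∑ j : Fin n, S (x, μ) (Sum.inr j) *
          fderiv ℝ (fun q => S q (Sum.inl j)) (x, μ) ((v, 0)))
        (∑ j : Fin n,
          (S (x, lam) (Sum.inr j) •
            ((ContinuousLinearMap.apply ℝ ℝ ((v, 0))).comp
              ((fderiv ℝ (fderiv ℝ (fun q => S q (Sum.inl j))) (x, lam)).comp
                (ContinuousLinearMap.inr ℝ (Fin r → ℝ) (Fin l → ℝ)))) +
           fderiv ℝ (fun q => S q (Sum.inl j)) (x, lam) ((v, 0)) •
            ((fderiv ℝ (fun q => S q (Sum.inr j)) (x, lam)).comp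
              (ContinuousLinearMap.inr ℝ (Fin r → ℝ) (Fin l → ℝ))))) lam :=
      HasFDerivAt.fun_sum fun j _ =>
        (hasFDerivAt_partial_snd (fun q => S q (Sum.inr j)) (hS2d j _ hp)).mul
          (hasFDerivAt_partial_fderiv_snd (fun q => S q (Sum.inl j)) (hS1c j _ hp) _)
    have heq : (fun μ => fderiv ℝ W (x, μ) ((v, 0))) =ᶠ[nhds lam]
        (fun μ => ∑ j : Fin n, S (x, μ) (Sum.inr j) *
          fderiv ℝ (fun q => S q (Sum.inl j)) (x, μ) ((v, 0))) := by
      filter_upwards [hΛ.mem_nhds hlam] with μ hμ using hWdef' (x, μ) ⟨hx, hμ⟩ v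
    have hTT : fderiv ℝ (fun μ => fderiv ℝ W (x, μ) ((v, 0))) lam = fderiv ℝ (fun μ => ∑ j : Fin n, S (x, μ) (Sum.inr j) * fderiv ℝ (fun q => S q (Sum.inl j)) (x, μ) ((v, 0))) lam := heq.fderiv_eq
    rw [hL.fderiv, hR.fderiv] at hTT
    have hTTk := DFunLike.congr_fun hTT (Pi.single k 1 : Fin l → ℝ)
    simpa only [ContinuousLinearMap.coe_comp', Function.comp_apply,
      ContinuousLinearMap.inr_apply, ContinuousLinearMap.apply_apply,
      ContinuousLinearMap.coe_sum', Finset.sum_apply, ContinuousLinearMap.add_apply,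
      ContinuousLinearMap.coe_smul', Pi.smul_apply, smul_eq_mul] using hTTk
  -- symmetry of second derivatives
  have hsymW : IsSymmSndFDerivAt ℝ W (x, lam) := (hWc _ hp).isSymmSndFDerivAt (by rw [minSmoothness_of_isRCLikeNormedField]; exact WithTop.coe_le_coe.mpr le_top)
  have hsymS1 : ∀ j : Fin n, IsSymmSndFDerivAt ℝ (fun q => S q (Sum.inl j)) (x, lam) :=
    fun j => (hS1c j _ hp).isSymmSndFDerivAt (by rw [minSmoothness_of_isRCLikeNormedField]; exact WithTop.coe_le_coe.mpr le_top)
  -- the main scalar identity, for each k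
  have hmain : ∀ k : Fin l,
      ∑ j : Fin n,
        (fderiv ℝ (fun q => S q (Sum.inr j)) (x, lam)
            ((0 : Fin r → ℝ), (Pi.single k 1 : Fin l → ℝ)) *
          fderiv ℝ (fun q => S q (Sum.inl j)) (x, lam) ((v, 0)) -
         fderiv ℝ (fun q => S q (Sum.inl j)) (x, lam)
            ((0 : Fin r → ℝ), (Pi.single k 1 : Fin l → ℝ)) *
          fderiv ℝ (fun q => S q (Sum.inr j)) (x, lam) ((v, 0))) = 0 := by
    intro k
    have hφdiff : DifferentiableAt ℝ (fun y => φ (y, lam)) x :=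
      (hφψ.symm.differentiableAt_iff).mp
        (differentiableAt_pi.mpr fun k' => (hψk k').differentiableAt)
    have h1 := fderiv_comp_proj (fun y => φ (y, lam)) hφdiff k v
    rw [ha0] at h1
    simp only [Pi.zero_apply] at h1
    rw [hφk k] at h1
    have h2 := hkey k
    rw [hsymW ((0 : Fin r → ℝ), (Pi.single k 1 : Fin l → ℝ)) ((v, 0))] at h2
    rw [h2] at h1
    rw [← Finset.sum_sub_distrib] at h1
    rw [← h1]
    refine Finset.sum_congr rfl fun j _ => ?_
    rw [hsymS1 j ((0 : Fin r → ℝ), (Pi.single k 1 : Fin l → ℝ)) ((v, 0))]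
    ring
  -- vector notation
  set a : (Fin n ⊕ Fin n) → ℝ := fderiv ℝ S (x, lam) ((v, 0)) with ha_def
  have hcompS1 : ∀ (c : (Fin r → ℝ) × (Fin l → ℝ)) (j : Fin n),
      fderiv ℝ (fun q => S q (Sum.inl j)) (x, lam) c = fderiv ℝ S (x, lam) c (Sum.inl j) :=
    fun c j => fderiv_comp_proj S hSp (Sum.inl j) c
  have hcompS2 : ∀ (c : (Fin r → ℝ) × (Fin l → ℝ)) (j : Fin n),
      fderiv ℝ (fun q => S q (Sum.inr j)) (x, lam) c = fderiv ℝ S (x, lam) c (Sum.inr j) :=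
    fun c j => fderiv_comp_proj S hSp (Sum.inr j) c
  -- symJ n *ᵥ a explicitly
  have hJa : (symJ n) *ᵥ a = Sum.elim (fun j => a (Sum.inr j)) (fun j => - a (Sum.inl j)) := by
    rw [symJ, fromBlocks_mulVec]
    simp only [Matrix.zero_mulVec, Matrix.one_mulVec, Matrix.neg_mulVec, zero_add, add_zero]
    rfl
  -- the λ-directions pair to zero with J a
  have hLb : ∀ k : Fin l,
      (fderiv ℝ S (x, lam) ((0 : Fin r → ℝ), (Pi.single k 1 : Fin l → ℝ))) ⬝ᵥ
        ((symJ n) *ᵥ a) = 0 := by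
    intro k
    have hm := hmain k
    simp only [hcompS1, hcompS2] at hm
    rw [Finset.sum_sub_distrib] at hm
    rw [hJa]
    simp only [dotProduct, Fintype.sum_sum_type, Sum.elim_inl, Sum.elim_inr, mul_neg]
    rw [Finset.sum_neg_distrib]
    linarith [hm]
  -- the x-directions pair to zero with J a (from hsol2)
  have hLa : ∀ u : Fin r → ℝ,
      (fderiv ℝ S (x, lam) ((u, (0 : Fin l → ℝ)))) ⬝ᵥ ((symJ n) *ᵥ a) = 0 := by
    intro u
    have h0 := hsol2 x hx lam hlam
    have h1 : u ⬝ᵥ (((mjac (fun y => S (y, lam)) x)ᵀ * symJ n *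
        mjac (fun y => S (y, lam)) x) *ᵥ v) = 0 := by
      rw [h0, Matrix.zero_mulVec, dotProduct_zero]
    rw [Matrix.mul_assoc, ← Matrix.mulVec_mulVec, ← Matrix.mulVec_mulVec,
      Matrix.dotProduct_mulVec, Matrix.vecMul_transpose] at h1
    rw [mjac_mulVec, mjac_mulVec, fderiv_partial_fst S hSp, fderiv_partial_fst S hSp] at h1
    rw [← ha_def] at h1
    exact h1
  -- all of ℝ^{2n} pairs to zero with J a, by surjectivity of D S
  have hLall : ∀ c : (Fin n ⊕ Fin n) → ℝ, c ⬝ᵥ ((symJ n) *ᵥ a) = 0 := by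
    intro c
    have hc : fderiv ℝ S (x, lam) (fderiv ℝ Sinv (S (x, lam)) c) = c := by
      have h := DFunLike.congr_fun hcomp2 c
      simpa using h
    have hLw : ∀ w : Fin l → ℝ,
        (fderiv ℝ S (x, lam) (((0 : Fin r → ℝ), w))) ⬝ᵥ ((symJ n) *ᵥ a) = 0 := by
      intro w
      have hw : (((0 : Fin r → ℝ), w) : (Fin r → ℝ) × (Fin l → ℝ)) =
          ∑ k, w k • (((0 : Fin r → ℝ), (Pi.single k 1 : Fin l → ℝ)) :
            (Fin r → ℝ) × (Fin l → ℝ)) := by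
        refine Prod.ext ?_ ?_
        · rw [Prod.fst_sum]; simp
        · rw [Prod.snd_sum]; simpa using pi_sum_single w
      rw [hw, map_sum]
      have hswap : (∑ k, fderiv ℝ S (x, lam) (w k • (((0 : Fin r → ℝ),
            (Pi.single k 1 : Fin l → ℝ)) : (Fin r → ℝ) × (Fin l → ℝ)))) ⬝ᵥ
            ((symJ n) *ᵥ a) =
          ∑ k, (fderiv ℝ S (x, lam) (w k • (((0 : Fin r → ℝ),
            (Pi.single k 1 : Fin l → ℝ)) : (Fin r → ℝ) × (Fin l → ℝ)))) ⬝ᵥ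
            ((symJ n) *ᵥ a) := by
        simp only [dotProduct, Finset.sum_apply, Finset.sum_mul]
        exact Finset.sum_comm
      rw [hswap]
      refine Finset.sum_eq_zero fun k _ => ?_
      rw [_root_.map_smul, smul_dotProduct, hLb k, smul_zero]
    set z := fderiv ℝ Sinv (S (x, lam)) c with hz
    have hzsplit : fderiv ℝ S (x, lam) z =
        fderiv ℝ S (x, lam) ((z.1, (0 : Fin l → ℝ))) +
          fderiv ℝ S (x, lam) (((0 : Fin r → ℝ), z.2)) := by
      rw [← map_add]
      congr 1
      exact Prod.ext (by simp) (by simp)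
    rw [← hc, hzsplit, add_dotProduct, hLa z.1, hLw z.2, add_zero]
  -- hence J a = 0, so a = 0
  have hJa0 : (symJ n) *ᵥ a = 0 := by
    funext i
    have h := hLall (Pi.single i 1)
    simpa [dotProduct, Pi.single_apply] using h
  have ha' : a = 0 := by
    rw [hJa] at hJa0
    funext i
    cases i with
    | inl j => have := congrFun hJa0 (Sum.inr j); simpa using this
    | inr j => have := congrFun hJa0 (Sum.inl j); simpa using this
  -- conclude v = 0 by injectivity of D S
  have hv0' : ((v, (0 : Fin l → ℝ)) : (Fin r → ℝ) × (Fin l → ℝ)) = 0 := by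
    have h := DFunLike.congr_fun hcomp1 (((v, (0 : Fin l → ℝ))) : (Fin r → ℝ) × (Fin l → ℝ))
    simp only [ContinuousLinearMap.coe_comp', Function.comp_apply,
      ContinuousLinearMap.id_apply] at h
    rw [← ha_def, ha'] at h
    rw [← h]
    simp
  exact congrArg Prod.fst hv0'
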